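/- arXiv:2110.04703 — 2 statements merged into one kernel-verified Lean document; each statement's English description precedes it below -/
import Mathlib

section
/- Let A ∈ ℝ^{m×n} have no zero rows, let x⋆ ∈ ℝ^n lie in the row space of A, and set b = A x⋆. Let D = Diag(‖A_1‖,...,‖A_m‖) and let σ ≥ 0 be a constant such that ‖D^{-1} A v‖² ≥ σ² ‖v‖² for every v in the row space of A. Let x ∈ ℝ^n be such that x - x⋆ lies in the row space of A, and let S ⊆ {1,...,m} be a nonempty selectable set for x, i.e. i ∉ S implies A_i x = b_i. For i ∈ S let x'(i) denote the Kaczmarz update of x with row i. Then with uniform probabilities, (1/|S|) ∑_{i∈S} ‖x'(i) - x⋆‖² ≤ (1 - σ²/|S|) ‖x - x⋆‖². -/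
open RealInnerProductSpace

/-!
The error `e = x - x⋆` of a Kaczmarz step with row `Aᵢ` is `e` projected onto the hyperplane
`Aᵢ⊥`, so by Pythagoras the step lowers `‖e‖²` by exactly `(⟪Aᵢ, e⟫ / ‖Aᵢ‖)²`. Rows outside
the selectable set have `⟪Aᵢ, e⟫ = 0`, so summing over `S` gives the full sum `‖D⁻¹ A e‖²`,
which is at least `σ² ‖e‖²` because `e` lies in the row space.
-/

section Kaczmarz

variable {E : Type*} [NormedAddCommGroup E] [InnerProductSpace ℝ E]

theorem norm_sub_inner_div_norm_sq_smul_sq (a e : E) :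
    ‖e - (⟪a, e⟫ / ‖a‖ ^ 2) • a‖ ^ 2 = ‖e‖ ^ 2 - (⟪a, e⟫ / ‖a‖) ^ 2 := by
  rcases eq_or_ne a 0 with rfl | ha
  · simp
  have hnorm : ‖a‖ ≠ 0 := norm_ne_zero_iff.mpr ha
  rw [norm_sub_sq_real, real_inner_smul_right, norm_smul, real_inner_comm, mul_pow,
    Real.norm_eq_abs, sq_abs]
  field_simp
  ring

theorem norm_kaczmarz_update_sub_sq (a x z : E) :
    ‖(x - ((⟪a, x⟫ - ⟪a, z⟫) / ‖a‖ ^ 2) • a) - z‖ ^ 2 =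
      ‖x - z‖ ^ 2 - (⟪a, x - z⟫ / ‖a‖) ^ 2 := by
  rw [← inner_sub_right, ← norm_sub_inner_div_norm_sq_smul_sq, sub_right_comm]

end Kaczmarz

theorem ssrk_one_step_uniform_general {m n : ℕ}
    (A : Fin m → EuclideanSpace ℝ (Fin n))
    (xstar : EuclideanSpace ℝ (Fin n))
    (b : Fin m → ℝ) (hb : ∀ i, b i = ⟪A i, xstar⟫)
    (σ : ℝ)
    (hsv : ∀ v ∈ Submodule.span ℝ (Set.range A),
      σ ^ 2 * ‖v‖ ^ 2 ≤ ∑ i, (⟪A i, v⟫ / ‖A i‖) ^ 2)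
    (x : EuclideanSpace ℝ (Fin n))
    (hx : x - xstar ∈ Submodule.span ℝ (Set.range A))
    (S : Finset (Fin m)) (hSne : S.Nonempty)
    (hS : ∀ i, i ∉ S → ⟪A i, x⟫ = b i) :
    (1 / (S.card : ℝ)) *
        ∑ i ∈ S, ‖(x - ((⟪A i, x⟫ - b i) / ‖A i‖ ^ 2) • A i) - xstar‖ ^ 2 ≤
      (1 - σ ^ 2 / (S.card : ℝ)) * ‖x - xstar‖ ^ 2 := by
  set r : Fin m → ℝ := fun i ↦ ⟪A i, x - xstar⟫ / ‖A i‖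
  have hsum : ∑ i ∈ S, ‖(x - ((⟪A i, x⟫ - b i) / ‖A i‖ ^ 2) • A i) - xstar‖ ^ 2 =
      S.card * ‖x - xstar‖ ^ 2 - ∑ i ∈ S, r i ^ 2 := by
    simp only [hb, norm_kaczmarz_update_sub_sq, Finset.sum_sub_distrib, Finset.sum_const,
      nsmul_eq_mul, r]
  have hfull : ∑ i ∈ S, r i ^ 2 = ∑ i, r i ^ 2 := by
    refine Finset.sum_subset S.subset_univ fun i _ hi ↦ ?_
    simp [r, inner_sub_right, hS i hi, hb]
  have hcard : (0 : ℝ) < S.card := by exact_mod_cast hSne.card_pos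
  have hbound : σ ^ 2 * ‖x - xstar‖ ^ 2 ≤ ∑ i ∈ S, r i ^ 2 := hfull ▸ hsv _ hx
  rw [hsum, one_div_mul_eq_div, one_sub_div hcard.ne', div_mul_eq_mul_div, sub_mul]
  gcongr

/-- (Corollary 1 of the paper.) With uniform probabilities, a constant
`σ ≥ 0` satisfying `‖D⁻¹ A v‖² ≥ σ² ‖v‖²` for all `v` in the row space of `A` (the rows
of `D⁻¹ A` are `Aᵢ/‖Aᵢ‖`), and a nonempty selectable set `S` for the iterate `x`, the
expected squared error of the SSRK update satisfies
`(1/|S|) ∑_{i∈S} ‖x'(i) - x⋆‖² ≤ (1 - σ²/|S|) ‖x - x⋆‖²`. -/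
theorem ssrk_one_step_uniform {m n : ℕ}
    (A : Fin m → EuclideanSpace ℝ (Fin n)) (hA : ∀ i, A i ≠ 0)
    (xstar : EuclideanSpace ℝ (Fin n))
    (hxstar : xstar ∈ Submodule.span ℝ (Set.range A))
    (b : Fin m → ℝ) (hb : ∀ i, b i = ⟪A i, xstar⟫)
    (σ : ℝ) (hσ : 0 ≤ σ)
    (hsv : ∀ v ∈ Submodule.span ℝ (Set.range A),
      σ ^ 2 * ‖v‖ ^ 2 ≤ ∑ i, (⟪A i, v⟫ / ‖A i‖) ^ 2)
    (x : EuclideanSpace ℝ (Fin n))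
    (hx : x - xstar ∈ Submodule.span ℝ (Set.range A))
    (S : Finset (Fin m)) (hSne : S.Nonempty)
    (hS : ∀ i, i ∉ S → ⟪A i, x⟫ = b i) :
    (1 / (S.card : ℝ)) *
        ∑ i ∈ S, ‖(x - ((⟪A i, x⟫ - b i) / ‖A i‖ ^ 2) • A i) - xstar‖ ^ 2 ≤
      (1 - σ ^ 2 / (S.card : ℝ)) * ‖x - xstar‖ ^ 2 :=
  ssrk_one_step_uniform_general A xstar b hb σ hsv x hx S hSne hS
end

section
/- Let A ∈ ℝ^{m×n} with m ≥ 2 have no zero rows, let x⋆ ∈ ℝ^n lie in the row space of A, and set b = A x⋆. Let σ ≥ 0 be a constant such that ‖A v‖² ≥ σ² ‖v‖² for every v in the row space of A. Let x ∈ ℝ^n be such that x - x⋆ lies in the row space of A, let i⁻ ∈ {1,...,m} satisfy A_{i⁻} x = b_{i⁻}, and let S = {1,...,m} \ {i⁻}. For i ∈ S let x'(i) denote the Kaczmarz update of x with row i. Then with probabilities proportional to squared row norms, ∑_{i∈S} (‖A_i‖² / (‖A‖_F² - ‖A_{i⁻}‖²)) ‖x'(i) - x⋆‖² ≤ (1 -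 σ² / (‖A‖_F² - ‖A_{i⁻}‖²)) ‖x - x⋆‖². -/
/-!
Write `e = x - x⋆`. A Kaczmarz step with row `aᵢ` removes from `e` its component along `aᵢ`,
so by Pythagoras `‖aᵢ‖² ‖x'(i) - x⋆‖² = ‖aᵢ‖² ‖e‖² - ⟪aᵢ, e⟫²`. Averaging with weights
`‖aᵢ‖² / D`, `D = ∑_{i∈S} ‖aᵢ‖²`, gives `‖e‖² - (∑_{i∈S} ⟪aᵢ, e⟫²) / D`. Since the omitted row
satisfies `⟪a_{i⁻}, e⟫ = 0`, the sum over `S` is the full sum `‖A e‖² ≥ σ² ‖e‖²`.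
-/

open Finset RealInnerProductSpace

section Kaczmarz

variable {E : Type*} [NormedAddCommGroup E] [InnerProductSpace ℝ E]

/-- For `a ≠ 0`, the orthogonal projection of `x` onto the hyperplane `⟪a, ·⟫ = β`. -/
noncomputable def kaczmarzStep (a : E) (β : ℝ) (x : E) : E :=
  x - ((⟪a, x⟫ - β) / ‖a‖ ^ 2) • a

theorem kaczmarzStep_sub (a x y : E) :
    kaczmarzStep a ⟪a, y⟫ x - y = (x - y) - (⟪a, x - y⟫ / ‖a‖ ^ 2) • a := by
  rw [kaczmarzStep, inner_sub_right]
  abel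

/-- Stated with the factor `‖a‖²` so that it also holds for `a = 0`. -/
theorem sq_norm_mul_sq_norm_sub_inner_div_smul (a e : E) :
    ‖a‖ ^ 2 * ‖e - (⟪a, e⟫ / ‖a‖ ^ 2) • a‖ ^ 2 = ‖a‖ ^ 2 * ‖e‖ ^ 2 - ⟪a, e⟫ ^ 2 := by
  rcases eq_or_ne a 0 with rfl | ha
  · simp
  have ha' : ‖a‖ ≠ 0 := norm_ne_zero_iff.mpr ha
  rw [norm_sub_sq_real, real_inner_smul_right, norm_smul, mul_pow, Real.norm_eq_abs, sq_abs,
    real_inner_comm e a]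
  field_simp
  ring

theorem sum_sq_norm_mul_sq_norm_kaczmarzStep_sub {ι : Type*} (s : Finset ι) (a : ι → E)
    (x y : E) :
    ∑ i ∈ s, ‖a i‖ ^ 2 * ‖kaczmarzStep (a i) ⟪a i, y⟫ x - y‖ ^ 2 =
      (∑ i ∈ s, ‖a i‖ ^ 2) * ‖x - y‖ ^ 2 - ∑ i ∈ s, ⟪a i, x - y⟫ ^ 2 := by
  simp only [kaczmarzStep_sub, sq_norm_mul_sq_norm_sub_inner_div_smul, sum_sub_distrib,
    sum_mul]

end Kaczmarz

theorem mul_sub_div_le_one_sub_div_mul {d e q s : ℝ} (hd : 0 ≤ d) (he : 0 ≤ e)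
    (hq : s * e ≤ q) : (d * e - q) / d ≤ (1 - s / d) * e := by
  rcases hd.eq_or_lt with rfl | hd
  · simpa using he
  rw [sub_div, mul_div_cancel_left₀ _ hd.ne', sub_mul, one_mul, div_mul_eq_mul_div]
  gcongr

theorem nssrk_one_step_rownorm_general {m n : ℕ}
    (A : Fin m → EuclideanSpace ℝ (Fin n))
    (xstar : EuclideanSpace ℝ (Fin n))
    (b : Fin m → ℝ) (hb : ∀ i, b i = ⟪A i, xstar⟫)
    (σ : ℝ)
    (hsv : ∀ v ∈ Submodule.span ℝ (Set.range A),
      σ ^ 2 * ‖v‖ ^ 2 ≤ ∑ i, ⟪A i, v⟫ ^ 2)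
    (x : EuclideanSpace ℝ (Fin n))
    (hx : x - xstar ∈ Submodule.span ℝ (Set.range A))
    (iprev : Fin m) (hiprev : ⟪A iprev, x⟫ = b iprev)
    (S : Finset (Fin m)) (hS : S = Finset.univ \ {iprev}) :
    ∑ i ∈ S, (‖A i‖ ^ 2 / ((∑ j, ‖A j‖ ^ 2) - ‖A iprev‖ ^ 2)) *
        ‖(x - ((⟪A i, x⟫ - b i) / ‖A i‖ ^ 2) • A i) - xstar‖ ^ 2 ≤
      (1 - σ ^ 2 / ((∑ j, ‖A j‖ ^ 2) - ‖A iprev‖ ^ 2)) * ‖x - xstar‖ ^ 2 := by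
  obtain rfl : b = fun i => ⟪A i, xstar⟫ := funext hb
  subst hS
  have hprev : ⟪A iprev, x - xstar⟫ ^ 2 = 0 := by
    rw [inner_sub_right, hiprev, sub_self, sq, zero_mul]
  rw [sdiff_singleton_eq_erase, ← sum_erase_eq_sub (mem_univ _)]
  simp_rw [div_mul_eq_mul_div]
  rw [← sum_div]
  change (∑ i ∈ _, ‖A i‖ ^ 2 * ‖kaczmarzStep (A i) ⟪A i, xstar⟫ x - xstar‖ ^ 2) / _ ≤ _
  rw [sum_sq_norm_mul_sq_norm_kaczmarzStep_sub,
    sum_erase (f := fun i => ⟪A i, x - xstar⟫ ^ 2) _ hprev]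
  exact mul_sub_div_le_one_sub_div_mul (sum_nonneg fun i _ => sq_nonneg _) (sq_nonneg _)
    (hsv _ hx)

/-- (Corollary 4 of the paper, iterations `k ≥ 1`.) For the
Non-Repetitive Selectable Set Randomized Kaczmarz method with probabilities proportional
to the squared row norms, where `S = [m] \ {i⁻}` and the previously chosen row `i⁻`
satisfies its equation, the expected squared error of the update satisfies
`∑_{i∈S} (‖Aᵢ‖²/(‖A‖_F² - ‖A_{i⁻}‖²)) ‖x'(i) - x⋆‖² ≤
  (1 - σ²/(‖A‖_F² - ‖A_{i⁻}‖²)) ‖x - x⋆‖²`, where `‖A‖_F² = ∑ⱼ ‖Aⱼ‖²`. -/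
theorem nssrk_one_step_rownorm {m n : ℕ} (hm : 2 ≤ m)
    (A : Fin m → EuclideanSpace ℝ (Fin n)) (hA : ∀ i, A i ≠ 0)
    (xstar : EuclideanSpace ℝ (Fin n))
    (hxstar : xstar ∈ Submodule.span ℝ (Set.range A))
    (b : Fin m → ℝ) (hb : ∀ i, b i = ⟪A i, xstar⟫)
    (σ : ℝ) (hσ : 0 ≤ σ)
    (hsv : ∀ v ∈ Submodule.span ℝ (Set.range A),
      σ ^ 2 * ‖v‖ ^ 2 ≤ ∑ i, ⟪A i, v⟫ ^ 2)
    (x : EuclideanSpace ℝ (Fin n))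
    (hx : x - xstar ∈ Submodule.span ℝ (Set.range A))
    (iprev : Fin m) (hiprev : ⟪A iprev, x⟫ = b iprev)
    (S : Finset (Fin m)) (hS : S = Finset.univ \ {iprev}) :
    ∑ i ∈ S, (‖A i‖ ^ 2 / ((∑ j, ‖A j‖ ^ 2) - ‖A iprev‖ ^ 2)) *
        ‖(x - ((⟪A i, x⟫ - b i) / ‖A i‖ ^ 2) • A i) - xstar‖ ^ 2 ≤
      (1 - σ ^ 2 / ((∑ j, ‖A j‖ ^ 2) - ‖A iprev‖ ^ 2)) * ‖x - xstar‖ ^ 2 :=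
  nssrk_one_step_rownorm_general A xstar b hb σ hsv x hx iprev hiprev S hS
end
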